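/- Let |u⟩ and |v⟩ be unit vectors in ℂ^d and let α, β be real numbers. Then every eigenvalue of the Hermitian matrix α|u⟩⟨u| + β|v⟩⟨v| is either 0 or equal to (α+β)/2 + (1/2)√((α−β)² + 4αβ|⟨u|v⟩|²) or (α+β)/2 − (1/2)√((α−β)² + 4αβ|⟨u|v⟩|²). (Note that (α−β)² + 4αβ|⟨u|v⟩|² ≥ 0 since |⟨u|v⟩|² ∈ [0,1].) -/

import Mathlib

/-
Write `t = ⟨u|v⟩`, `a = ⟨u|w⟩`, `b = ⟨v|w⟩`. The eigenvector equation reads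
`α a u + β b v = μ w`; pairing it with `u` and with `v` gives the linear system
`(μ - α) a = β t b`, `(μ - β) b = α t̄ a`. For `μ ≠ 0` the pair `(a, b)` is nonzero, so the
system is singular: `(μ - α)(μ - β) = αβ|t|²`. The roots of this quadratic are the two stated
values; its discriminant `(α - β)² + 4αβ|t|²` is nonnegative because `|t| ≤ 1`.
-/

open Matrix

/-- The outer product `|u⟩⟨v|`, with entries `u i * conj (v j)`. -/
noncomputable def outer {m n : Type*} (u : m → ℂ) (v : n → ℂ) : Matrix m n ℂ :=
  Matrix.vecMulVec u (star v)

theorem outer_mulVec {m n : Type*} [Fintype n] (u : m → ℂ) (v w : n → ℂ) :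
    outer u v *ᵥ w = (star v ⬝ᵥ w) • u := by
  rw [outer, vecMulVec_mulVec, op_smul_eq_smul]

theorem norm_star_dotProduct_sq_le {𝕜 ι : Type*} [RCLike 𝕜] [Fintype ι] (u v : ι → 𝕜) :
    ‖star u ⬝ᵥ v‖ ^ 2 ≤ RCLike.re (star u ⬝ᵥ u) * RCLike.re (star v ⬝ᵥ v) := by
  have h := inner_mul_inner_self_le (𝕜 := 𝕜) (WithLp.toLp 2 u) (WithLp.toLp 2 v)
  simp only [EuclideanSpace.inner_toLp_toLp, dotProduct_comm _ (star _)] at h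
  rwa [star_dotProduct v u, norm_star, ← sq] at h

theorem mul_eq_mul_of_ne_zero_solution {R : Type*} [CommRing R] [NoZeroDivisors R]
    {p q r s a b : R} (ha : p * a = r * b) (hb : q * b = s * a) (hab : a ≠ 0 ∨ b ≠ 0) :
    p * q = r * s := by
  rw [← sub_eq_zero]
  rcases hab with ha0 | hb0
  · exact (mul_eq_zero.mp (by linear_combination q * ha + r * hb)).resolve_right ha0
  · exact (mul_eq_zero.mp (by linear_combination p * hb + s * ha)).resolve_right hb0

theorem eq_zero_or_sub_mul_sub_eq {ι : Type*} [Fintype ι] {u v w : ι → ℂ}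
    (hu : star u ⬝ᵥ u = 1) (hv : star v ⬝ᵥ v = 1) (hw : w ≠ 0) {α β μ : ℂ}
    (heig : (α • outer u u + β • outer v v) *ᵥ w = μ • w) :
    μ = 0 ∨ (μ - α) * (μ - β) = α * β * (‖star u ⬝ᵥ v‖ ^ 2 : ℝ) := by
  set t := star u ⬝ᵥ v
  set a := star u ⬝ᵥ w
  set b := star v ⬝ᵥ w
  have hvu : star v ⬝ᵥ u = starRingEnd ℂ t := star_dotProduct v u
  have hcomb : (α * a) • u + (β * b) • v = μ • w := by
    simpa only [add_mulVec, smul_mulVec, outer_mulVec, smul_smul] using heig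
  have hpair (x : ι → ℂ) :
      α * a * (star x ⬝ᵥ u) + β * b * (star x ⬝ᵥ v) = μ * (star x ⬝ᵥ w) := by
    simpa only [dotProduct_add, dotProduct_smul, smul_eq_mul] using congrArg (star x ⬝ᵥ ·) hcomb
  have hpair_u := hpair u
  have hpair_v := hpair v
  rw [hu] at hpair_u
  rw [hv, hvu] at hpair_v
  by_cases hμ : μ = 0
  · exact .inl hμ
  have hab : a ≠ 0 ∨ b ≠ 0 := by
    by_contra! h
    rw [h.1, h.2, mul_zero, mul_zero, zero_smul, zero_smul, add_zero, eq_comm] at hcomb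
    exact (smul_eq_zero.mp hcomb).elim hμ hw
  refine .inr ?_
  have hdet := mul_eq_mul_of_ne_zero_solution (p := μ - α) (q := μ - β) (r := β * t)
    (s := α * starRingEnd ℂ t) (by linear_combination -hpair_u) (by linear_combination -hpair_v) hab
  rw [hdet, Complex.ofReal_pow, ← Complex.mul_conj']
  ring

theorem eq_or_eq_of_sub_mul_sub_eq {α β s : ℝ} (hD : 0 ≤ (α - β) ^ 2 + 4 * α * β * s) {μ : ℂ}
    (h : (μ - α) * (μ - β) = α * β * s) :
    μ = (((α + β) / 2 + √((α - β) ^ 2 + 4 * α * β * s) / 2 : ℝ) : ℂ) ∨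
    μ = (((α + β) / 2 - √((α - β) ^ 2 + 4 * α * β * s) / 2 : ℝ) : ℂ) := by
  have hsq : ((√((α - β) ^ 2 + 4 * α * β * s) : ℝ) : ℂ) ^ 2 = (α - β) ^ 2 + 4 * α * β * s := by
    exact_mod_cast Real.sq_sqrt hD
  simp only [← sub_eq_zero (a := μ), ← mul_eq_zero]
  push_cast
  linear_combination h - hsq / 4

/-- For unit vectors `u, v ∈ ℂ^d` and reals `α, β`, every eigenvalue of
`α|u⟩⟨u| + β|v⟩⟨v|` is either `0` or
`(α+β)/2 ± (1/2)√((α−β)² + 4αβ|⟨u|v⟩|²)`. -/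
theorem two_projector_eigenvalues {d : ℕ} (u v : Fin d → ℂ)
    (hu : star u ⬝ᵥ u = 1) (hv : star v ⬝ᵥ v = 1) (α β : ℝ)
    (μ : ℂ) (w : Fin d → ℂ) (hw : w ≠ 0)
    (heig : ((α : ℂ) • outer u u + (β : ℂ) • outer v v) *ᵥ w = μ • w) :
    μ = 0 ∨
    μ = (((α + β) / 2 +
        Real.sqrt ((α - β) ^ 2 + 4 * α * β * ‖star u ⬝ᵥ v‖ ^ 2) / 2 : ℝ) : ℂ) ∨
    μ = (((α + β) / 2 -
        Real.sqrt ((α - β) ^ 2 + 4 * α * β * ‖star u ⬝ᵥ v‖ ^ 2) / 2 : ℝ) : ℂ) := by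
  refine (eq_zero_or_sub_mul_sub_eq hu hv hw heig).imp_right fun hchar => ?_
  have hle : ‖star u ⬝ᵥ v‖ ^ 2 ≤ 1 := by
    simpa [hu, hv] using norm_star_dotProduct_sq_le u v
  have hD : 0 ≤ (α - β) ^ 2 + 4 * α * β * ‖star u ⬝ᵥ v‖ ^ 2 := by
    nlinarith [sq_nonneg (α + β), sq_nonneg (α - β), sq_nonneg ‖star u ⬝ᵥ v‖]
  exact eq_or_eq_of_sub_mul_sub_eq hD hchar
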